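/- arXiv:1002.3898 — 2 statements merged into one kernel-verified Lean document; each statement's English description precedes it below -/
import Mathlib

section
/- For the spherical catenoid M_a in H³ with a > 1/2, parametrized so that the induced metric is I = ds² + (a cosh 2s - 1/2) dt², with |A|² = 2(a² - 1/4)/(a cosh 2s - 1/2)² and dv = (a cosh 2s - 1/2)^{1/2} ds dt with 0 ≤ t ≤ 2π, the total curvature is finite: ∫_{M_a} |A|² dv = 8π(a² - 1/4) ∫₀^∞ (a cosh 2s - 1/2)^{-3/2} ds < ∞. -/
open Real MeasureTheory

/-!
Since `cosh 2s = 1 + 2 sinh² s ≥ 1 + s²`, for `a > 1/2` the profile `a cosh 2s - 1/2` is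
bounded below by `(a - 1/2)(1 + s²) > 0`. Its `-3/2` power is therefore dominated by a multiple of
`(1 + s²)^{-3/2}`, which is integrable on the line. On the other side, `|A|² dv` simplifies to
`2(a² - 1/4)(a cosh 2s - 1/2)^{-3/2} ds dt`, the `t`-integral contributes `2π`, and evenness in `s`
turns the integral over `ℝ` into twice the one over `(0, ∞)`.
-/

lemma Real.one_add_sq_le_cosh_two_mul (x : ℝ) : 1 + x ^ 2 ≤ cosh (2 * x) := by
  have h : x ^ 2 ≤ sinh x ^ 2 := by
    rw [sq_le_sq, abs_sinh]
    exact self_le_sinh_iff.mpr (abs_nonneg x)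
  rw [cosh_two_mul, cosh_sq]
  nlinarith [sq_nonneg (sinh x)]

lemma mul_one_add_sq_le_mul_cosh_two_mul_sub_half {a : ℝ} (ha : 0 ≤ a) (s : ℝ) :
    (a - 1/2) * (1 + s ^ 2) ≤ a * cosh (2 * s) - 1/2 := by
  nlinarith [Real.one_add_sq_le_cosh_two_mul s, sq_nonneg s]

lemma mul_cosh_two_mul_sub_half_pos {a : ℝ} (ha : 1/2 < a) (s : ℝ) :
    0 < a * cosh (2 * s) - 1/2 :=
  (mul_pos (by linarith) (by positivity)).trans_le
    (mul_one_add_sq_le_mul_cosh_two_mul_sub_half (by linarith) s)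

lemma integrable_mul_cosh_two_mul_sub_half_rpow_neg {a p : ℝ} (ha : 1/2 < a) (hp : 1/2 < p) :
    Integrable fun s : ℝ => (a * cosh (2 * s) - 1/2) ^ (-p) := by
  have hc : 0 < a - 1/2 := by linarith
  have hbound : Integrable fun s : ℝ => (a - 1/2) ^ (-p) * (1 + ‖s‖ ^ 2) ^ (-(2 * p) / 2) :=
    (integrable_rpow_neg_one_add_norm_sq (by simp; linarith)).const_mul _
  refine hbound.mono' (by fun_prop : Measurable _).aestronglyMeasurable
    (Filter.Eventually.of_forall fun s => ?_)
  have hlow := mul_one_add_sq_le_mul_cosh_two_mul_sub_half (by linarith : 0 ≤ a) s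
  rw [norm_of_nonneg (rpow_nonneg (mul_cosh_two_mul_sub_half_pos ha s).le _), norm_eq_abs, sq_abs,
    neg_div, mul_div_cancel_left₀ p two_ne_zero, ← mul_rpow hc.le (by positivity)]
  exact rpow_le_rpow_of_nonpos (by positivity) hlow (by linarith)

lemma div_sq_mul_rpow_half {D : ℝ} (hD : 0 < D) (c : ℝ) :
    c / D ^ 2 * D ^ ((1:ℝ)/2) = c * D ^ (-(3:ℝ)/2) := by
  rw [div_mul_eq_mul_div, mul_div_assoc, ← rpow_natCast D 2, ← rpow_sub hD]
  norm_num

lemma integral_comp_cosh_two_mul (g : ℝ → ℝ) :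
    ∫ s, g (cosh (2 * s)) = 2 * ∫ s in Set.Ioi 0, g (cosh (2 * s)) := by
  rw [← integral_comp_abs (f := fun s => g (cosh (2 * s)))]
  congr 1 with s
  rw [show 2 * |s| = |2 * s| by rw [abs_mul, abs_two], cosh_abs]

/-- For the spherical catenoid `M_a` in `H³` with `a > 1/2`,
parametrized over `(s,t) ∈ ℝ × [0,2π]` with
`|A|² = 2(a² - 1/4)/(a cosh 2s - 1/2)²` and `dv = (a cosh 2s - 1/2)^{1/2} ds dt`,
the total curvature is finite:
`∫_{M_a} |A|² dv = 8π(a² - 1/4) ∫₀^∞ (a cosh 2s - 1/2)^{-3/2} ds < ∞`. -/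
theorem stmt_11 (a : ℝ) (ha : 1/2 < a) :
    (∫ s : ℝ, ∫ t in Set.Icc (0:ℝ) (2*π),
        (2 * (a^2 - 1/4) / (a * Real.cosh (2*s) - 1/2)^2)
          * (a * Real.cosh (2*s) - 1/2) ^ ((1:ℝ)/2))
      = 8 * π * (a^2 - 1/4)
          * ∫ s in Set.Ioi (0:ℝ), (a * Real.cosh (2*s) - 1/2) ^ (-(3:ℝ)/2) ∧
    IntegrableOn (fun s : ℝ => (a * Real.cosh (2*s) - 1/2) ^ (-(3:ℝ)/2))
      (Set.Ioi (0:ℝ)) := by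
  refine ⟨?_, by
    rw [neg_div]; exact (integrable_mul_cosh_two_mul_sub_half_rpow_neg ha (by norm_num)).integrableOn⟩
  have inner (s : ℝ) : (∫ t in Set.Icc (0:ℝ) (2*π),
      (2 * (a^2 - 1/4) / (a * cosh (2*s) - 1/2)^2) * (a * cosh (2*s) - 1/2) ^ ((1:ℝ)/2))
      = 4 * π * (a^2 - 1/4) * (a * cosh (2*s) - 1/2) ^ (-(3:ℝ)/2) := by
    rw [setIntegral_const, volume_real_Icc_of_le (by positivity), smul_eq_mul,
      div_sq_mul_rpow_half (mul_cosh_two_mul_sub_half_pos ha s)]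
    ring
  simp_rw [inner, integral_const_mul,
    integral_comp_cosh_two_mul fun c => (a * c - 1/2) ^ (-(3:ℝ)/2)]
  ring
end

section
/- Let x: [0,∞) → ℝ solve the ODE x' = √(x² - 1 - a² x^{2(1-n)}) with x(0) = t > 1, x'(0) = 0 and a = t^{n-1}√(t²-1) > 0, n ≥ 2. Then x is monotonically increasing, x(s) ≥ t for all s ≥ 0, and the quantity |A|² := n(n-1)(x² - x'² - 1)/x² satisfies |A|² = n(n-1) t^{2(n-1)}(t²-1)/x^{2n} ≤ n(n-1)(t²-1). -/
open Real Set

/-!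
Since `x' ≥ 0`, `x` is nondecreasing, so `x ≥ x(0) = t`. With `a² = t^{2(n-1)}(t² - 1)`, the
radicand is `x² - 1 - (t² - 1)(t/x)^{2(n-1)} ≥ x² - t² ≥ 0`, so squaring the square root gives
back the radicand, and `x² - x'² - 1 = a² x^{2(1-n)}`. The bound follows from
`t^{2(n-1)} ≤ t^{2n} ≤ x^{2n}`.
-/

theorem Convex.monotoneOn_of_hasDerivAt_nonneg {D : Set ℝ} (hD : Convex ℝ D) {f f' : ℝ → ℝ}
    (hf : ∀ s ∈ D, HasDerivAt f (f' s) s) (hf'₀ : ∀ s ∈ D, 0 ≤ f' s) : MonotoneOn f D :=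
  monotoneOn_of_hasDerivWithinAt_nonneg hD
    (fun s hs ↦ (hf s hs).continuousAt.continuousWithinAt)
    (fun s hs ↦ (hf s (interior_subset hs)).hasDerivWithinAt)
    (fun s hs ↦ hf'₀ s (interior_subset hs))

theorem Real.rpow_two_mul_one_sub_natCast {x : ℝ} (hx : 0 ≤ x) {n : ℕ} (hn : 1 ≤ n) :
    x ^ ((2 : ℝ) * (1 - n)) = (x ^ (2 * (n - 1)))⁻¹ := by
  rw [← rpow_natCast, ← rpow_neg hx]
  push_cast [hn]
  ring_nf

theorem sq_mul_rpow_two_mul_one_sub_natCast {t x : ℝ} (ht : 1 ≤ t) (hx : 0 ≤ x) {n : ℕ}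
    (hn : 1 ≤ n) :
    (t ^ (n - 1) * √(t ^ 2 - 1)) ^ 2 * x ^ ((2 : ℝ) * (1 - n))
      = t ^ (2 * (n - 1)) * (t ^ 2 - 1) / x ^ (2 * (n - 1)) := by
  rw [rpow_two_mul_one_sub_natCast hx hn, mul_pow, sq_sqrt (by nlinarith), ← pow_mul,
    mul_comm (n - 1) 2, div_eq_mul_inv]

theorem pow_div_pow_le_one {t y : ℝ} (ht : 1 ≤ t) (hty : t ≤ y) {m k : ℕ} (hmk : m ≤ k) :
    t ^ m / y ^ k ≤ 1 :=
  div_le_one_of_le₀ ((pow_le_pow_right₀ ht hmk).trans (pow_le_pow_left₀ (by linarith) hty k))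
    (pow_nonneg (by linarith) k)

theorem sq_sub_one_sub_pow_mul_div_pow_nonneg {t y : ℝ} (ht : 1 ≤ t) (hty : t ≤ y) (k : ℕ) :
    0 ≤ y ^ 2 - 1 - t ^ k * (t ^ 2 - 1) / y ^ k := by
  have hratio : t ^ k / y ^ k ≤ 1 := pow_div_pow_le_one ht hty le_rfl
  have hsq : t ^ 2 ≤ y ^ 2 := pow_le_pow_left₀ (by linarith) hty 2
  rw [mul_div_right_comm]
  nlinarith [mul_le_mul_of_nonneg_right hratio (show 0 ≤ t ^ 2 - 1 by nlinarith)]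

/-- Let `x : [0,∞) → ℝ` solve `x' = √(x² - 1 - a²x^{2(1-n)})` with
`x(0) = t > 1` and `a = t^{n-1}√(t²-1) > 0`, `n ≥ 2`.  Then `x` is monotonically
increasing on `[0,∞)`, `x(s) ≥ t` for all `s ≥ 0`, and
`|A|² := n(n-1)(x² - x'² - 1)/x²` satisfies
`|A|² = n(n-1)t^{2(n-1)}(t²-1)/x^{2n} ≤ n(n-1)(t²-1)`. -/
theorem stmt_14 (n : ℕ) (hn : 2 ≤ n) (t : ℝ) (ht : 1 < t)
    (a : ℝ) (ha : a = t ^ (n - 1) * Real.sqrt (t^2 - 1))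
    (x : ℝ → ℝ) (hx0 : x 0 = t)
    (hode : ∀ s ∈ Set.Ici (0:ℝ),
      HasDerivAt x (Real.sqrt ((x s)^2 - 1 - a^2 * (x s) ^ ((2:ℝ) * (1 - (n:ℝ))))) s) :
    MonotoneOn x (Set.Ici (0:ℝ)) ∧
    (∀ s ∈ Set.Ici (0:ℝ), t ≤ x s) ∧
    (∀ s ∈ Set.Ici (0:ℝ),
      (n : ℝ) * (n - 1)
          * ((x s)^2 - (Real.sqrt ((x s)^2 - 1 - a^2 * (x s) ^ ((2:ℝ) * (1 - (n:ℝ)))))^2 - 1)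
          / (x s)^2
        = (n : ℝ) * (n - 1) * t ^ (2 * (n - 1)) * (t^2 - 1) / (x s) ^ (2 * n) ∧
      (n : ℝ) * (n - 1) * t ^ (2 * (n - 1)) * (t^2 - 1) / (x s) ^ (2 * n)
        ≤ (n : ℝ) * (n - 1) * (t^2 - 1)) := by
  have hmono : MonotoneOn x (Ici 0) :=
    (convex_Ici 0).monotoneOn_of_hasDerivAt_nonneg hode fun _ _ ↦ sqrt_nonneg _
  have hge : ∀ s ∈ Ici (0 : ℝ), t ≤ x s := fun s hs ↦ hx0 ▸ hmono self_mem_Ici hs hs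
  refine ⟨hmono, hge, fun s hs ↦ ?_⟩
  have hts := hge s hs
  have hxs : 0 < x s := by linarith
  rw [ha, sq_mul_rpow_two_mul_one_sub_natCast ht.le hxs.le (by omega),
    sq_sqrt (sq_sub_one_sub_pow_mul_div_pow_nonneg ht.le hts _)]
  have hcoef : 0 ≤ (n : ℝ) * (n - 1) * (t ^ 2 - 1) := by
    have : (2 : ℝ) ≤ n := by exact_mod_cast hn
    exact mul_nonneg (by nlinarith) (by nlinarith)
  constructor
  · have hpow : x s ^ (2 * n) = x s ^ (2 * (n - 1)) * x s ^ 2 := by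
      rw [← pow_add]; congr 1; omega
    rw [hpow]
    field_simp
    ring
  · calc (n : ℝ) * (n - 1) * t ^ (2 * (n - 1)) * (t ^ 2 - 1) / x s ^ (2 * n)
        = n * (n - 1) * (t ^ 2 - 1) * (t ^ (2 * (n - 1)) / x s ^ (2 * n)) := by ring
      _ ≤ n * (n - 1) * (t ^ 2 - 1) :=
        mul_le_of_le_one_right hcoef (pow_div_pow_le_one ht.le hts (by omega))
end
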